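/- arXiv:1701.00522 — 3 statements merged into one kernel-verified Lean document; each statement's English description precedes it below -/
import Mathlib

section
/- If u(t,x) = a·exp(i(kx+ωt)) with real constants a ≠ 0, k, ω and v = u - u_xx, then u satisfies the NLS-type peakon equation i·v_t + i(Im(ū u_x)v)_x + (1/2)(|u|²-|u_x|²)v = 0 if and only if ω = (1/2)a²(1-3k²). -/
open Complex

noncomputable section

/-- Partial t-derivative of a curried complex-valued function of (t,x). -/
def pdt (f : ℝ → ℝ → ℂ) (t x : ℝ) : ℂ := deriv (fun s => f s x) t

/-- Partial x-derivative of a curried complex-valued function of (t,x). -/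
def pdx (f : ℝ → ℝ → ℂ) (t x : ℝ) : ℂ := deriv (fun y => f t y) x

/-- The NLS-type peakon equation
`i·v_t + i(Im(ū u_x)v)_x + (1/2)(|u|²-|u_x|²)v = 0` holds at all (t,x). -/
def NLSPeakonEq (u v : ℝ → ℝ → ℂ) : Prop :=
  ∀ t x : ℝ,
    Complex.I * pdt v t x
      + Complex.I * pdx (fun t x =>
          (((((starRingEnd ℂ) (u t x)) * pdx u t x).im : ℝ) : ℂ) * v t x) t x
      + (1/2) * ((Complex.normSq (u t x) - Complex.normSq (pdx u t x) : ℝ) : ℂ) * v t x = 0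

/-!
The plane wave `u = a e^{i(kx+ωt)}` is an eigenfunction of `∂ₓ` and `∂ₜ` with eigenvalues `ik` and
`iω`, and `|u|² = a²`, `|u_x|² = k²a²`, `Im(ū u_x) = ka²` are constant. Hence `v = (1 + k²) u` and
every term of the equation is a constant multiple of `u`; since `u` never vanishes, the equation
holds iff the total coefficient `-(1 + k²)(ω - a²(1 - 3k²)/2)` vanishes.
-/

open ComplexConjugate

lemma pdx_const_mul (c : ℂ) (f : ℝ → ℝ → ℂ) :
    pdx (fun t x => c * f t x) = fun t x => c * pdx f t x := by
  ext t x
  exact deriv_const_mul_field c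

lemma pdt_const_mul (c : ℂ) (f : ℝ → ℝ → ℂ) :
    pdt (fun t x => c * f t x) = fun t x => c * pdt f t x := by
  ext t x
  exact deriv_const_mul_field c

lemma im_conj_mul_I_mul_ofReal_mul (r : ℝ) (z : ℂ) :
    (conj z * (I * r * z)).im = r * normSq z := by
  rw [show conj z * (I * r * z) = (r * normSq z : ℝ) * I by
    push_cast; rw [normSq_eq_conj_mul_self]; ring]
  simp

lemma hasDerivAt_const_mul_cexp_I_mul {f : ℝ → ℂ} {f' : ℂ} {x : ℝ} (c : ℂ)
    (hf : HasDerivAt f f' x) :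
    HasDerivAt (fun y => c * exp (I * f y)) (I * f' * (c * exp (I * f x))) x :=
  (((hf.const_mul I).cexp).const_mul c).congr_deriv (by ring)

def planeWave (a k ω : ℝ) (t x : ℝ) : ℂ := a * exp (I * (k * x + ω * t))

lemma pdx_planeWave (a k ω : ℝ) :
    pdx (planeWave a k ω) = fun t x => I * k * planeWave a k ω t x := by
  ext t x
  refine HasDerivAt.deriv ?_
  simpa [planeWave] using hasDerivAt_const_mul_cexp_I_mul (a : ℂ)
    (((hasDerivAt_id x).ofReal_comp.const_mul (k : ℂ)).add_const ((ω : ℂ) * t))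

lemma pdt_planeWave (a k ω : ℝ) :
    pdt (planeWave a k ω) = fun t x => I * ω * planeWave a k ω t x := by
  ext t x
  refine HasDerivAt.deriv ?_
  simpa [planeWave] using hasDerivAt_const_mul_cexp_I_mul (a : ℂ)
    (((hasDerivAt_id t).ofReal_comp.const_mul (ω : ℂ)).const_add ((k : ℂ) * x))

lemma normSq_planeWave (a k ω t x : ℝ) : normSq (planeWave a k ω t x) = a ^ 2 := by
  rw [planeWave, map_mul, normSq_ofReal,
    show I * (k * x + ω * t) = (k * x + ω * t : ℝ) * I by push_cast; ring,
    normSq_eq_norm_sq, norm_exp_ofReal_mul_I]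
  ring

lemma planeWave_ne_zero {a : ℝ} (ha : a ≠ 0) (k ω t x : ℝ) : planeWave a k ω t x ≠ 0 :=
  mul_ne_zero (ofReal_ne_zero.mpr ha) (exp_ne_zero _)

lemma nlsPeakonEq_planeWave_iff {a : ℝ} (ha : a ≠ 0) (k ω : ℝ) :
    NLSPeakonEq (planeWave a k ω) (fun t x => (1 + k ^ 2) * planeWave a k ω t x) ↔
      ω = (1/2) * a^2 * (1 - 3 * k^2) := by
  simp only [NLSPeakonEq, pdt_const_mul, pdx_const_mul, pdx_planeWave, pdt_planeWave,
    im_conj_mul_I_mul_ofReal_mul, normSq_planeWave, map_mul, normSq_I, normSq_ofReal]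
  push_cast
  have hw := planeWave_ne_zero ha k ω
  have hk : (1 + (k : ℂ) ^ 2) ≠ 0 := by exact_mod_cast (by positivity : (1 + k ^ 2 : ℝ) ≠ 0)
  calc _ ↔ ∀ t x : ℝ,
        (1 + (k : ℂ) ^ 2) * (ω - (1/2) * a^2 * (1 - 3 * k^2)) * planeWave a k ω t x = 0 := by
        refine forall₂_congr fun t x => ⟨fun h => ?_, fun h => ?_⟩
        · linear_combination -h + (1 + (k : ℂ) ^ 2) * (ω + k^2 * a^2) * planeWave a k ω t x * I_sq
        · linear_combination -h + (1 + (k : ℂ) ^ 2) * (ω + k^2 * a^2) * planeWave a k ω t x * I_sq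
    _ ↔ _ := by
      simp only [mul_eq_zero, hw, hk, or_false, false_or, forall_const, sub_eq_zero]
      rw [← ofReal_inj]
      push_cast
      rfl

theorem nls_planewave_dispersion (a k ω : ℝ) (ha : a ≠ 0)
    (u v : ℝ → ℝ → ℂ)
    (hu : ∀ t x : ℝ, u t x = (a : ℂ) * Complex.exp (Complex.I * ((k : ℂ) * x + (ω : ℂ) * t)))
    (hv : ∀ t x : ℝ, v t x = u t x - pdx (pdx u) t x) :
    NLSPeakonEq u v ↔ ω = (1/2) * a^2 * (1 - 3 * k^2) := by
  obtain rfl : u = planeWave a k ω := funext₂ hu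
  obtain rfl : v = fun t x => (1 + k ^ 2) * planeWave a k ω t x := by
    ext t x
    rw [hv, pdx_planeWave, pdx_const_mul, pdx_planeWave]
    linear_combination -(k : ℂ) ^ 2 * planeWave a k ω t x * I_sq
  exact nlsPeakonEq_planeWave_iff ha k ω
end
end

section
/- For the peaked travelling wave u(t,x) = c·e^{-|x-ct|} with c ∈ ℝ, and for every smooth compactly supported test function ψ : ℝ² → ℝ, the weak formulation of the mCH equation holds: ∬_{ℝ²} [ (ψ - ψ_xx)·u_t + (3ψ - ψ_xx)·u·u_x - (1/2)ψ_x·u_x² ] dx dt = 0. -/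
open MeasureTheory

noncomputable section

/-- Partial x-derivative of a function on ℝ × ℝ (first coordinate t, second x). -/
def psix (ψ : ℝ × ℝ → ℝ) (p : ℝ × ℝ) : ℝ := deriv (fun y => ψ (p.1, y)) p.2

/-- Second partial x-derivative. -/
def psixx (ψ : ℝ × ℝ → ℝ) (p : ℝ × ℝ) : ℝ := deriv (fun y => psix ψ (p.1, y)) p.2

/-- The mCH peakon profile u(t,x) = c e^{-|x-ct|}. -/
def upk (c : ℝ) (p : ℝ × ℝ) : ℝ := c * Real.exp (-|p.2 - c * p.1|)

/-- Its a.e. time derivative u_t = c² sgn(x-ct) e^{-|x-ct|}. -/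
def upkt (c : ℝ) (p : ℝ × ℝ) : ℝ :=
  c^2 * Real.sign (p.2 - c * p.1) * Real.exp (-|p.2 - c * p.1|)

/-- Its a.e. space derivative u_x = -c sgn(x-ct) e^{-|x-ct|}. -/
def upkx (c : ℝ) (p : ℝ × ℝ) : ℝ :=
  -c * Real.sign (p.2 - c * p.1) * Real.exp (-|p.2 - c * p.1|)

open Filter Set Topology in
lemma mCH_slice_integral_zero (c a : ℝ) (g : ℝ → ℝ) (hg : ContDiff ℝ (⊤ : ℕ∞) g)
    (hgs : HasCompactSupport g) :
    ∫ x : ℝ,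
      ((g x - deriv (deriv g) x) * (c ^ 2 * Real.sign (x - a) * Real.exp (-|x - a|))
        + (3 * g x - deriv (deriv g) x) * (c * Real.exp (-|x - a|)) *
            (-c * Real.sign (x - a) * Real.exp (-|x - a|))
        - (1/2) * deriv g x * (-c * Real.sign (x - a) * Real.exp (-|x - a|)) ^ 2) = 0 := by
  have hg' : ContDiff ℝ ((⊤ : ℕ∞) : WithTop ℕ∞) g := hg.of_le (by simp)
  have hdiff : Differentiable ℝ g := hg'.differentiable (by simp)
  have hg1 : ContDiff ℝ ((⊤ : ℕ∞) : WithTop ℕ∞) (deriv g) := (contDiff_infty_iff_deriv.mp hg').2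
  have hdiff1 : Differentiable ℝ (deriv g) := hg1.differentiable (by simp)
  have hdg : ∀ x, HasDerivAt g (deriv g x) x := fun x => (hdiff x).hasDerivAt
  have hdg1 : ∀ x, HasDerivAt (deriv g) (deriv (deriv g) x) x := fun x => (hdiff1 x).hasDerivAt
  have hcg : Continuous g := hg.continuous
  have hcg1 : Continuous (deriv g) := hg1.continuous
  have hcg2 : Continuous (deriv (deriv g)) := (contDiff_infty_iff_deriv.mp hg1).2.continuous
  -- vanishing outside tsupport g
  have htsub : tsupport (deriv g) ⊆ tsupport g :=
    closure_minimal support_deriv_subset (isClosed_tsupport g)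
  have hzero : ∀ x, x ∉ tsupport g → g x = 0 ∧ deriv g x = 0 ∧ deriv (deriv g) x = 0 := by
    intro x hx
    refine ⟨image_eq_zero_of_notMem_tsupport hx, ?_, ?_⟩
    · by_contra h; exact hx (support_deriv_subset h)
    · by_contra h; exact hx (htsub (support_deriv_subset h))
  obtain ⟨R, hR⟩ := hgs.isCompact.isBounded.subset_closedBall 0
  have ev_top : ∀ᶠ x in atTop, x ∉ tsupport g := by
    filter_upwards [eventually_gt_atTop R] with x hx hmem
    have h1 := hR hmem
    rw [Metric.mem_closedBall, Real.dist_eq, sub_zero] at h1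
    have := le_abs_self x
    linarith
  have ev_bot : ∀ᶠ x in atBot, x ∉ tsupport g := by
    filter_upwards [eventually_lt_atBot (-R)] with x hx hmem
    have h1 := hR hmem
    rw [Metric.mem_closedBall, Real.dist_eq, sub_zero] at h1
    have := neg_abs_le x
    linarith
  -- exponentials
  have hexp1c : Continuous fun x : ℝ => Real.exp (a - x) :=
    Real.continuous_exp.comp (continuous_const.sub continuous_id)
  have hexp2c : Continuous fun x : ℝ => Real.exp (2 * (a - x)) :=
    Real.continuous_exp.comp (continuous_const.mul (continuous_const.sub continuous_id))
  have hexp1c' : Continuous fun x : ℝ => Real.exp (x - a) :=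
    Real.continuous_exp.comp (continuous_id.sub continuous_const)
  have hexp2c' : Continuous fun x : ℝ => Real.exp (2 * (x - a)) :=
    Real.continuous_exp.comp (continuous_const.mul (continuous_id.sub continuous_const))
  have hE1 : ∀ x : ℝ, HasDerivAt (fun y => Real.exp (a - y)) (Real.exp (a - x) * (-1)) x :=
    fun x => (((hasDerivAt_id x).const_sub a).exp)
  have hE2 : ∀ x : ℝ, HasDerivAt (fun y => Real.exp (2 * (a - y)))
      (Real.exp (2 * (a - x)) * (2 * -1)) x :=
    fun x => ((((hasDerivAt_id x).const_sub a).const_mul 2).exp)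
  have hE1' : ∀ x : ℝ, HasDerivAt (fun y => Real.exp (y - a)) (Real.exp (x - a) * 1) x :=
    fun x => (((hasDerivAt_id x).sub_const a).exp)
  have hE2' : ∀ x : ℝ, HasDerivAt (fun y => Real.exp (2 * (y - a)))
      (Real.exp (2 * (x - a)) * (2 * 1)) x :=
    fun x => ((((hasDerivAt_id x).sub_const a).const_mul 2).exp)
  -- the four auxiliary functions
  set Fp : ℝ → ℝ := fun x => c ^ 2 * ((g x - deriv (deriv g) x) * Real.exp (a - x)
      - (3 * g x - deriv (deriv g) x + (1/2) * deriv g x) * Real.exp (2 * (a - x))) with hFp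
  set Gp : ℝ → ℝ := fun x => c ^ 2 * ((-g x - deriv g x) * Real.exp (a - x)
      + ((3/2) * g x + deriv g x) * Real.exp (2 * (a - x))) with hGp
  set Fm : ℝ → ℝ := fun x => c ^ 2 * (-(g x - deriv (deriv g) x) * Real.exp (x - a)
      + (3 * g x - deriv (deriv g) x - (1/2) * deriv g x) * Real.exp (2 * (x - a))) with hFm
  set Gm : ℝ → ℝ := fun x => c ^ 2 * ((-g x + deriv g x) * Real.exp (x - a)
      + ((3/2) * g x - deriv g x) * Real.exp (2 * (x - a))) with hGm
  have hGpderiv : ∀ x : ℝ, HasDerivAt Gp (Fp x) x := by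
    intro x
    have h1 : HasDerivAt (fun y => (-g y - deriv g y) * Real.exp (a - y))
        ((-deriv g x - deriv (deriv g) x) * Real.exp (a - x)
          + (-g x - deriv g x) * (Real.exp (a - x) * (-1))) x :=
      (((hdg x).neg).sub (hdg1 x)).mul (hE1 x)
    have h2 : HasDerivAt (fun y => ((3/2) * g y + deriv g y) * Real.exp (2 * (a - y)))
        (((3/2) * deriv g x + deriv (deriv g) x) * Real.exp (2 * (a - x))
          + ((3/2) * g x + deriv g x) * (Real.exp (2 * (a - x)) * (2 * -1))) x :=
      (((hdg x).const_mul (3/2)).add (hdg1 x)).mul (hE2 x)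
    have h3 := (h1.add h2).const_mul (c ^ 2)
    refine h3.congr_deriv ?_
    simp only [hFp]
    ring
  have hGmderiv : ∀ x : ℝ, HasDerivAt Gm (Fm x) x := by
    intro x
    have h1 : HasDerivAt (fun y => (-g y + deriv g y) * Real.exp (y - a))
        ((-deriv g x + deriv (deriv g) x) * Real.exp (x - a)
          + (-g x + deriv g x) * (Real.exp (x - a) * 1)) x :=
      (((hdg x).neg).add (hdg1 x)).mul (hE1' x)
    have h2 : HasDerivAt (fun y => ((3/2) * g y - deriv g y) * Real.exp (2 * (y - a)))
        (((3/2) * deriv g x - deriv (deriv g) x) * Real.exp (2 * (x - a))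
          + ((3/2) * g x - deriv g x) * (Real.exp (2 * (x - a)) * (2 * 1))) x :=
      (((hdg x).const_mul (3/2)).sub (hdg1 x)).mul (hE2' x)
    have h3 := (h1.add h2).const_mul (c ^ 2)
    refine h3.congr_deriv ?_
    simp only [hFm]
    ring
  -- continuity and integrability
  have hFpc : Continuous Fp :=
    continuous_const.mul (((hcg.sub hcg2).mul hexp1c).sub
      ((((continuous_const.mul hcg).sub hcg2).add (continuous_const.mul hcg1)).mul hexp2c))
  have hFmc : Continuous Fm :=
    continuous_const.mul ((((hcg.sub hcg2).neg).mul hexp1c').add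
      ((((continuous_const.mul hcg).sub hcg2).sub (continuous_const.mul hcg1)).mul hexp2c'))
  have hGpc : Continuous Gp :=
    continuous_const.mul ((((hcg.neg).sub hcg1).mul hexp1c).add
      (((continuous_const.mul hcg).add hcg1).mul hexp2c))
  have hGmc : Continuous Gm :=
    continuous_const.mul ((((hcg.neg).add hcg1).mul hexp1c').add
      (((continuous_const.mul hcg).sub hcg1).mul hexp2c'))
  have hFpcs : HasCompactSupport Fp := by
    apply hgs.mono'
    intro x hx
    by_contra hxt
    obtain ⟨h0, h1, h2⟩ := hzero x hxt
    apply hx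
    simp [hFp, h0, h1, h2]
  have hFmcs : HasCompactSupport Fm := by
    apply hgs.mono'
    intro x hx
    by_contra hxt
    obtain ⟨h0, h1, h2⟩ := hzero x hxt
    apply hx
    simp [hFm, h0, h1, h2]
  have hFpint : Integrable Fp := hFpc.integrable_of_hasCompactSupport hFpcs
  have hFmint : Integrable Fm := hFmc.integrable_of_hasCompactSupport hFmcs
  -- limits
  have hGptop : Filter.Tendsto Gp atTop (nhds 0) := by
    have hev : Gp =ᶠ[atTop] fun _ => (0 : ℝ) := by
      filter_upwards [ev_top] with x hx
      obtain ⟨h0, h1, _⟩ := hzero x hx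
      simp [hGp, h0, h1]
    exact (tendsto_congr' hev).mpr tendsto_const_nhds
  have hGmbot : Filter.Tendsto Gm atBot (nhds 0) := by
    have hev : Gm =ᶠ[atBot] fun _ => (0 : ℝ) := by
      filter_upwards [ev_bot] with x hx
      obtain ⟨h0, h1, _⟩ := hzero x hx
      simp [hGm, h0, h1]
    exact (tendsto_congr' hev).mpr tendsto_const_nhds
  -- the integrand
  set F : ℝ → ℝ := fun x =>
      ((g x - deriv (deriv g) x) * (c ^ 2 * Real.sign (x - a) * Real.exp (-|x - a|))
        + (3 * g x - deriv (deriv g) x) * (c * Real.exp (-|x - a|)) *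
            (-c * Real.sign (x - a) * Real.exp (-|x - a|))
        - (1/2) * deriv g x * (-c * Real.sign (x - a) * Real.exp (-|x - a|)) ^ 2) with hF
  -- F agrees with Fp on Ioi a
  have heqp : ∀ x ∈ Ioi a, F x = Fp x := by
    intro x hx
    have hlt : (0:ℝ) < x - a := by simp only [mem_Ioi] at hx; linarith
    have habs : |x - a| = x - a := abs_of_pos hlt
    have he : Real.exp (-|x - a|) = Real.exp (a - x) := by rw [habs]; ring_nf
    have he2 : Real.exp (2 * (a - x)) = Real.exp (a - x) * Real.exp (a - x) := by
      rw [← Real.exp_add]; ring_nf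
    simp only [hF, hFp, Real.sign_of_pos hlt, he, he2]
    ring
  have heqm : ∀ x ∈ Iio a, F x = Fm x := by
    intro x hx
    have hlt : x - a < 0 := by simp only [mem_Iio] at hx; linarith
    have habs : |x - a| = -(x - a) := abs_of_neg hlt
    have he : Real.exp (-|x - a|) = Real.exp (x - a) := by rw [habs]; ring_nf
    have he2 : Real.exp (2 * (x - a)) = Real.exp (x - a) * Real.exp (x - a) := by
      rw [← Real.exp_add]; ring_nf
    simp only [hF, hFm, Real.sign_of_neg hlt, he, he2]
    ring
  -- a.e. congruence on Iic a
  have hne : ∀ᵐ x : ℝ ∂volume, x ≠ a := by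
    rw [ae_iff]
    have : {x : ℝ | ¬ x ≠ a} = {a} := by ext y; simp
    rw [this]
    exact measure_singleton a
  have haem : F =ᵐ[volume.restrict (Iic a)] Fm := by
    rw [Filter.EventuallyEq, ae_restrict_iff' measurableSet_Iic]
    filter_upwards [hne] with x hx hxle
    exact heqm x (lt_of_le_of_ne hxle hx)
  have haep : F =ᵐ[volume.restrict (Ioi a)] Fp := by
    rw [Filter.EventuallyEq, ae_restrict_iff' measurableSet_Ioi]
    exact Filter.Eventually.of_forall fun x hx => heqp x hx
  have hFIic : IntegrableOn F (Iic a) := hFmint.integrableOn.congr haem.symm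
  have hFIoi : IntegrableOn F (Ioi a) := hFpint.integrableOn.congr haep.symm
  -- evaluate the two half-line integrals
  have hIoi : ∫ x in Ioi a, F x = 0 - Gp a := by
    rw [integral_congr_ae haep]
    exact integral_Ioi_of_hasDerivAt_of_tendsto (hGpc.continuousWithinAt)
      (fun x _ => hGpderiv x) hFpint.integrableOn hGptop
  have hIic : ∫ x in Iic a, F x = Gm a - 0 := by
    rw [integral_congr_ae haem]
    exact integral_Iic_of_hasDerivAt_of_tendsto (hGmc.continuousWithinAt)
      (fun x _ => hGmderiv x) hFmint.integrableOn hGmbot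
  have hsplit := intervalIntegral.integral_Iic_add_Ioi (μ := volume) (b := a) (f := F) hFIic hFIoi
  rw [← hsplit, hIic, hIoi]
  have ha : a - a = 0 := sub_self a
  simp only [hGp, hGm, ha, mul_zero, Real.exp_zero]
  ring

theorem mCH_peakon_weak_solution (c : ℝ) (ψ : ℝ × ℝ → ℝ)
    (hψ : ContDiff ℝ (⊤ : ℕ∞) ψ) (hsupp : HasCompactSupport ψ) :
    ∫ p : ℝ × ℝ,
      ((ψ p - psixx ψ p) * upkt c p
        + (3 * ψ p - psixx ψ p) * upk c p * upkx c p
        - (1/2) * psix ψ p * (upkx c p)^2) = 0 := by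
  set f : ℝ × ℝ → ℝ := fun p =>
      ((ψ p - psixx ψ p) * upkt c p
        + (3 * ψ p - psixx ψ p) * upk c p * upkx c p
        - (1/2) * psix ψ p * (upkx c p)^2) with hf
  by_cases hint : Integrable f volume
  · have key : ∀ t : ℝ, (∫ x : ℝ, f (t, x)) = 0 := by
      intro t
      have hiso : Isometry (fun x : ℝ => ((t, x) : ℝ × ℝ)) := by
        intro x y
        simp [Prod.edist_eq]
      have hgc : ContDiff ℝ (⊤ : ℕ∞) (fun x : ℝ => ψ (t, x)) :=
        hψ.comp (contDiff_const.prodMk contDiff_id)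
      have hgcs : HasCompactSupport (fun x : ℝ => ψ (t, x)) :=
        hsupp.comp_isClosedEmbedding hiso.isClosedEmbedding
      exact mCH_slice_integral_zero c (c * t) (fun x => ψ (t, x)) hgc hgcs
    rw [MeasureTheory.Measure.volume_eq_prod] at hint ⊢
    rw [MeasureTheory.integral_prod _ hint]
    have : (∫ t : ℝ, ∫ x : ℝ, f (t, x)) = ∫ _ : ℝ, (0:ℝ) :=
      integral_congr_ae (Filter.Eventually.of_forall key)
    rw [this, integral_zero]
  · exact integral_undef hint
end
end

section
/- Let U = (1/2)·[[1, λv],[-λv, -1]] and V = (1/4)·[[u_x²-u²-2λ⁻², λ(u_x²-u²)v - 2λ⁻¹(u+u_x)], [λ(u²-u_x²)v + 2λ⁻¹(u-u_x), u²-u_x²+2λ⁻²]], with v = u - u_xx and λ ≠ 0 a real parameter. Then the zero-curvature equation U_t - V_x + [U,V] = 0 holds for all λ ≠ 0 if and only if u satisfies the mCH equation v_t + (1/2)((u²-u_x²)v)_x = 0. -/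
set_option maxHeartbeats 1000000
noncomputable section

def pdtR (f : ℝ → ℝ → ℝ) (t x : ℝ) : ℝ := deriv (fun s => f s x) t
def pdxR (f : ℝ → ℝ → ℝ) (t x : ℝ) : ℝ := deriv (fun y => f t y) x

/-- Entrywise partial t-derivative of a matrix-valued function. -/
def pdtM (F : ℝ → ℝ → Matrix (Fin 2) (Fin 2) ℝ) (t x : ℝ) : Matrix (Fin 2) (Fin 2) ℝ :=
  Matrix.of fun i j => deriv (fun s => F s x i j) t

/-- Entrywise partial x-derivative of a matrix-valued function. -/
def pdxM (F : ℝ → ℝ → Matrix (Fin 2) (Fin 2) ℝ) (t x : ℝ) : Matrix (Fin 2) (Fin 2) ℝ :=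
  Matrix.of fun i j => deriv (fun y => F t y i j) x

lemma deriv_cmul (c : ℝ) (f : ℝ → ℝ) (t : ℝ) :
    deriv (fun s => c * f s) t = c * deriv f t := deriv_const_mul_field c

theorem mCH_lax_pair_zero_curvature (u : ℝ → ℝ → ℝ)
    (hu : ContDiff ℝ (⊤ : ℕ∞) (Function.uncurry u))
    (v : ℝ → ℝ → ℝ)
    (hv : ∀ t x : ℝ, v t x = u t x - pdxR (pdxR u) t x)
    (U V : ℝ → ℝ → ℝ → Matrix (Fin 2) (Fin 2) ℝ)
    (hU : ∀ lam t x : ℝ, U lam t x =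
      (1/2 : ℝ) • !![1, lam * v t x; -(lam * v t x), -1])
    (hV : ∀ lam t x : ℝ, V lam t x =
      (1/4 : ℝ) • !![(pdxR u t x)^2 - (u t x)^2 - 2 * (lam⁻¹)^2,
          lam * ((pdxR u t x)^2 - (u t x)^2) * v t x - 2 * lam⁻¹ * (u t x + pdxR u t x);
          lam * ((u t x)^2 - (pdxR u t x)^2) * v t x + 2 * lam⁻¹ * (u t x - pdxR u t x),
          (u t x)^2 - (pdxR u t x)^2 + 2 * (lam⁻¹)^2]) :
    (∀ lam : ℝ, lam ≠ 0 → ∀ t x : ℝ,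
        pdtM (U lam) t x - pdxM (V lam) t x
          + (U lam t x * V lam t x - V lam t x * U lam t x) = 0)
    ↔ (∀ t x : ℝ,
        pdtR v t x
          + (1/2) * pdxR (fun t x => ((u t x)^2 - (pdxR u t x)^2) * v t x) t x = 0) := by
  have key : ∀ lam : ℝ, lam ≠ 0 → ∀ t x : ℝ,
      pdtM (U lam) t x - pdxM (V lam) t x
        + (U lam t x * V lam t x - V lam t x * U lam t x)
      = !![0, (lam/2) * (pdtR v t x
              + (1/2) * pdxR (fun t x => ((u t x)^2 - (pdxR u t x)^2) * v t x) t x);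
           -((lam/2) * (pdtR v t x
              + (1/2) * pdxR (fun t x => ((u t x)^2 - (pdxR u t x)^2) * v t x) t x)), 0] := by
    intro lam hlam t x
    -- one-variable smoothness in x
    have hfx : ContDiff ℝ (↑(⊤:ℕ∞)) (fun y => u t y) :=
      (hu.comp (contDiff_const.prodMk contDiff_id)).of_le (by simp)
    have d1 : Differentiable ℝ (fun y => u t y) := hfx.differentiable (by simp)
    have hfx' := (contDiff_infty_iff_deriv.mp hfx).2
    have d2 : Differentiable ℝ (deriv (fun y => u t y)) :=
      hfx'.differentiable (by simp)
    have d3 : Differentiable ℝ (deriv (deriv (fun y => u t y))) :=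
      ((contDiff_infty_iff_deriv.mp hfx').2).differentiable (by simp)
    have hvfun : (fun y => v t y) = fun y => u t y - deriv (deriv (fun z => u t z)) y :=
      funext fun y => hv t y
    have dv : Differentiable ℝ (fun y => v t y) := by
      rw [hvfun]; exact d1.sub d3
    -- HasDerivAt facts
    have h1 : HasDerivAt (fun y => u t y) (pdxR u t x) x := (d1 x).hasDerivAt
    have h2 : HasDerivAt (fun y => pdxR u t y) (pdxR (pdxR u) t x) x := (d2 x).hasDerivAt
    have dg1 : DifferentiableAt ℝ (fun y => ((u t y)^2 - (pdxR u t y)^2) * v t y) x :=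
      (((d1 x).pow 2).sub ((d2 x).pow 2)).mul (dv x)
    have Hg : HasDerivAt (fun y => ((u t y)^2 - (pdxR u t y)^2) * v t y)
        (pdxR (fun t x => ((u t x)^2 - (pdxR u t x)^2) * v t x) t x) x := dg1.hasDerivAt
    -- t-derivatives of the entries of U
    have ht01 : deriv (fun s => 1 / 2 * (lam * v s x)) t = lam / 2 * pdtR v t x := by
      rw [show (fun s => 1 / 2 * (lam * v s x)) = fun s => (lam/2) * v s x from
        funext fun s => by ring, deriv_cmul]
      rfl
    have ht10 : deriv (fun s => 1 / 2 * -(lam * v s x)) t = -(lam / 2) * pdtR v t x := by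
      rw [show (fun s => 1 / 2 * -(lam * v s x)) = fun s => (-(lam/2)) * v s x from
        funext fun s => by ring, deriv_cmul]
      rfl
    have htc1 : deriv (fun _ : ℝ => (1:ℝ) / 2 * 1) t = 0 := by simp
    have htc2 : deriv (fun _ : ℝ => (1:ℝ) / 2 * -1) t = 0 := by simp
    -- x-derivatives of the entries of V
    have F00 : deriv (fun y => 1 / 4 * (pdxR u t y ^ 2 - u t y ^ 2 - 2 * lam⁻¹ ^ 2)) x
        = 1/4 * (2 * pdxR u t x * pdxR (pdxR u) t x - 2 * u t x * pdxR u t x) := by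
      have H := HasDerivAt.const_mul ((1:ℝ)/4)
        (((h2.pow 2).sub (h1.pow 2)).sub_const (2 * lam⁻¹ ^ 2))
      exact H.deriv.trans (by push_cast; ring)
    have F11 : deriv (fun y => 1 / 4 * (u t y ^ 2 - pdxR u t y ^ 2 + 2 * lam⁻¹ ^ 2)) x
        = 1/4 * (2 * u t x * pdxR u t x - 2 * pdxR u t x * pdxR (pdxR u) t x) := by
      have H := HasDerivAt.const_mul ((1:ℝ)/4)
        (((h1.pow 2).sub (h2.pow 2)).add_const (2 * lam⁻¹ ^ 2))
      exact H.deriv.trans (by push_cast; ring)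
    have F01 : deriv (fun y => 1 / 4 *
          (lam * (pdxR u t y ^ 2 - u t y ^ 2) * v t y - 2 * lam⁻¹ * (u t y + pdxR u t y))) x
        = -(lam/4) * pdxR (fun t x => ((u t x)^2 - (pdxR u t x)^2) * v t x) t x
          + (-(lam⁻¹/2)) * (pdxR u t x + pdxR (pdxR u) t x) := by
      rw [show (fun y => 1 / 4 *
            (lam * (pdxR u t y ^ 2 - u t y ^ 2) * v t y - 2 * lam⁻¹ * (u t y + pdxR u t y)))
          = fun y => (-(lam/4)) * (((u t y)^2 - (pdxR u t y)^2) * v t y)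
            + (-(lam⁻¹/2)) * (u t y + pdxR u t y) from funext fun y => by ring]
      exact ((HasDerivAt.const_mul (-(lam/4)) Hg).add
        (HasDerivAt.const_mul (-(lam⁻¹/2)) (h1.add h2))).deriv
    have F10 : deriv (fun y => 1 / 4 *
          (lam * (u t y ^ 2 - pdxR u t y ^ 2) * v t y + 2 * lam⁻¹ * (u t y - pdxR u t y))) x
        = (lam/4) * pdxR (fun t x => ((u t x)^2 - (pdxR u t x)^2) * v t x) t x
          + (lam⁻¹/2) * (pdxR u t x - pdxR (pdxR u) t x) := by
      rw [show (fun y => 1 / 4 *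
            (lam * (u t y ^ 2 - pdxR u t y ^ 2) * v t y + 2 * lam⁻¹ * (u t y - pdxR u t y)))
          = fun y => (lam/4) * (((u t y)^2 - (pdxR u t y)^2) * v t y)
            + (lam⁻¹/2) * (u t y - pdxR u t y) from funext fun y => by ring]
      exact ((HasDerivAt.const_mul (lam/4) Hg).add
        (HasDerivAt.const_mul (lam⁻¹/2) (h1.sub h2))).deriv
    have hC : pdxR (pdxR u) t x = u t x - v t x := by have := hv t x; linarith
    rw [← Matrix.ext_iff]
    simp only [Fin.forall_fin_two]
    refine ⟨⟨?_, ?_⟩, ?_, ?_⟩ <;>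
    · simp only [pdtM, pdxM, hU, hV, Matrix.sub_apply, Matrix.add_apply, Matrix.mul_apply,
        Matrix.smul_apply, Matrix.of_apply, Fin.sum_univ_two, smul_eq_mul,
        Matrix.cons_val', Matrix.cons_val_zero, Matrix.cons_val_one, Matrix.head_cons,
        Matrix.empty_val', Matrix.cons_val_fin_one, Matrix.head_fin_const]
      simp only [ht01, ht10, F00, F01, F10, F11, htc1, htc2, hC]
      field_simp
      ring
  constructor
  · intro h t x
    have h2 := h 2 two_ne_zero t x
    rw [key 2 two_ne_zero t x] at h2
    have h3 := Matrix.ext_iff.2 h2 0 1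
    simp only [Matrix.of_apply, Matrix.cons_val', Matrix.cons_val_zero, Matrix.cons_val_one,
      Matrix.head_cons, Matrix.empty_val', Matrix.cons_val_fin_one, Matrix.zero_apply] at h3
    norm_num at h3
    linarith
  · intro h lam hlam t x
    rw [key lam hlam t x, h t x]
    rw [← Matrix.ext_iff]
    simp only [Fin.forall_fin_two]
    norm_num
end
end
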